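/- Let (λ_n)_{n≥1} be a sequence of positive real numbers satisfying λ_n ≥ C·n^α for all n, with constants C > 0 and α > 0. Then for every complex s with Re s > 1/(2α) one has the Mellin transform identity (1/Γ(s)) · ∫₀^∞ t^{s−1} · ( Σ_n e^{−t·λ_n²} ) dt = Σ_n λ_n^{−2s}, where both the integral and the series converge absolutely. -/

import Mathlib

/-!
Term by term, `t ^ (s - 1) * exp (-t λ_n²)` integrates over `(0, ∞)` to `Γ(s) λ_n^(-2s)`, and the
integral of its absolute value is `Γ(σ) λ_n^(-2σ)` with `σ = Re s`. The growth bound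
`λ_n ≥ C n^α` makes `∑ λ_n^(-2σ)` converge as soon as `2ασ > 1`, so the series of terms converges
absolutely in `L¹(0, ∞)`; its sum is then integrable and may be integrated term by term.
-/

open MeasureTheory

namespace MeasureTheory

variable {α E : Type*} [MeasurableSpace α] {μ : Measure α} [NormedAddCommGroup E] [CompleteSpace E]

theorem integrable_tsum_of_summable_integral_norm {ι : Type*} [Countable ι] {F : ι → α → E}
    (hF_int : ∀ i, Integrable (F i) μ) (hF_sum : Summable fun i ↦ ∫ a, ‖F i a‖ ∂μ) :
    Integrable (fun a ↦ ∑' i, F i a) μ := by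
  set f : ι → α →₁[μ] E := fun i ↦ (hF_int i).toL1 (F i)
  have hf : ∑' i, ‖f i‖ₑ ≠ ⊤ := tsum_enorm_ne_top_iff_summable_norm.2 <|
    hF_sum.congr fun i ↦ (L1.norm_of_fun_eq_integral_norm (hF_int i)).symm
  have hF_ae : ∀ᵐ a ∂μ, ∀ i, f i a = F i a := ae_all_iff.2 fun i ↦ (hF_int i).coeFn_toL1
  -- The series converges in `L¹`, hence almost everywhere to its `L¹` sum.
  refine (L1.integrable_coeFn (∑' i, f i)).congr ?_
  filter_upwards [Lp.hasSum_coeFn_tsum hf, hF_ae] with a hsum hfF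
  simp only [hfF] at hsum
  exact hsum.tsum_eq.symm

end MeasureTheory

section

open Complex Set

theorem integrableOn_cpow_mul_exp_neg_mul_Ioi {a : ℂ} {r : ℝ} (ha : 0 < a.re) (hr : 0 < r) :
    IntegrableOn (fun t : ℝ ↦ (t : ℂ) ^ (a - 1) * cexp (-(r * t))) (Ioi 0) :=
  .of_integral_ne_zero <| by
    rw [integral_cpow_mul_exp_neg_mul_Ioi ha hr]
    exact mul_ne_zero (by simp [cpow_eq_zero_iff, hr.ne']) (Gamma_ne_zero_of_re_pos ha)

theorem integral_norm_cpow_mul_exp_neg_mul_Ioi {a : ℂ} {r : ℝ} (ha : 0 < a.re) (hr : 0 < r) :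
    ∫ t in Ioi (0 : ℝ), ‖(t : ℂ) ^ (a - 1) * cexp (-(r * t))‖ =
      (1 / r) ^ a.re * Real.Gamma a.re := by
  rw [← Real.integral_rpow_mul_exp_neg_mul_Ioi ha hr]
  refine setIntegral_congr_fun measurableSet_Ioi fun t ht ↦ ?_
  rw [norm_mul, norm_cpow_eq_rpow_re_of_pos ht, ← ofReal_mul, ← ofReal_neg, ← ofReal_exp,
    norm_real, Real.norm_of_nonneg (Real.exp_pos _).le, sub_re, one_re]

variable {ι : Type*} {p : ι → ℝ} {s : ℂ}

theorem cpow_mul_tsum_exp_eq_tsum (t : ℝ) :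
    (t : ℂ) ^ (s - 1) * ∑' i, (Real.exp (-t * p i) : ℂ) =
      ∑' i, (t : ℂ) ^ (s - 1) * cexp (-(p i * t)) := by
  rw [← tsum_mul_left]
  congr! 2 with i
  push_cast
  ring_nf

theorem summable_integral_norm_cpow_mul_exp_neg_mul (hp : ∀ i, 0 < p i) (hs : 0 < s.re)
    (h_sum : Summable fun i ↦ p i ^ (-s.re)) :
    Summable fun i ↦ ∫ t in Ioi (0 : ℝ), ‖(t : ℂ) ^ (s - 1) * cexp (-(p i * t))‖ := by
  simp_rw [integral_norm_cpow_mul_exp_neg_mul_Ioi hs (hp _)]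
  refine (h_sum.mul_right (Real.Gamma s.re)).congr fun i ↦ ?_
  rw [one_div, Real.inv_rpow (hp i).le, Real.rpow_neg (hp i).le]

theorem integrableOn_cpow_mul_tsum_exp [Countable ι] (hp : ∀ i, 0 < p i) (hs : 0 < s.re)
    (h_sum : Summable fun i ↦ p i ^ (-s.re)) :
    IntegrableOn (fun t : ℝ ↦ (t : ℂ) ^ (s - 1) * ∑' i, (Real.exp (-t * p i) : ℂ)) (Ioi 0) := by
  simp_rw [cpow_mul_tsum_exp_eq_tsum]
  exact integrable_tsum_of_summable_integral_norm
    (fun i ↦ integrableOn_cpow_mul_exp_neg_mul_Ioi hs (hp i))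
    (summable_integral_norm_cpow_mul_exp_neg_mul hp hs h_sum)

theorem hasSum_cpow_neg_mellin_tsum_exp [Countable ι] (hp : ∀ i, 0 < p i) (hs : 0 < s.re)
    (h_sum : Summable fun i ↦ p i ^ (-s.re)) :
    HasSum (fun i ↦ (p i : ℂ) ^ (-s))
      (1 / Gamma s *
        ∫ t in Ioi (0 : ℝ), (t : ℂ) ^ (s - 1) * ∑' i, (Real.exp (-t * p i) : ℂ)) := by
  simp_rw [cpow_mul_tsum_exp_eq_tsum]
  refine ((hasSum_integral_of_summable_integral_norm
    (fun i ↦ integrableOn_cpow_mul_exp_neg_mul_Ioi hs (hp i))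
    (summable_integral_norm_cpow_mul_exp_neg_mul hp hs h_sum)).mul_left (1 / Gamma s)).congr_fun
    fun i ↦ ?_
  have harg : ((p i : ℝ) : ℂ).arg ≠ Real.pi :=
    arg_ofReal_of_nonneg (hp i).le ▸ Real.pi_pos.ne
  rw [integral_cpow_mul_exp_neg_mul_Ioi hs (hp i), one_div, one_div, inv_cpow _ _ harg, cpow_neg,
    mul_comm _ (Gamma s), inv_mul_cancel_left₀ (Gamma_ne_zero_of_re_pos hs)]

end

theorem summable_rpow_neg_of_mul_rpow_le {f : ℕ → ℝ} {C α q : ℝ} (hC : 0 < C) (hq : 0 ≤ q)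
    (hf : ∀ n : ℕ, C * ((n : ℝ) + 1) ^ α ≤ f n) (hαq : 1 < α * q) :
    Summable fun n ↦ f n ^ (-q) := by
  have hζ : Summable fun n : ℕ ↦ ((n : ℝ) + 1) ^ (-(α * q)) := by
    simpa using (summable_nat_add_iff 1).2 (Real.summable_nat_rpow.2 (neg_lt_neg hαq))
  refine .of_nonneg_of_le (fun n ↦ ?_) (fun n ↦ ?_) (hζ.mul_left (C ^ (-q)))
  · exact Real.rpow_nonneg ((by positivity : 0 ≤ C * ((n : ℝ) + 1) ^ α).trans (hf n)) _
  calc f n ^ (-q) ≤ (C * ((n : ℝ) + 1) ^ α) ^ (-q) :=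
        Real.rpow_le_rpow_of_nonpos (by positivity) (hf n) (neg_nonpos.2 hq)
    _ = C ^ (-q) * ((n : ℝ) + 1) ^ (-(α * q)) := by
        rw [Real.mul_rpow hC.le (by positivity), ← Real.rpow_mul (by positivity), mul_neg]

theorem cexp_neg_two_mul_log_eq_cpow {x : ℝ} (hx : 0 < x) (s : ℂ) :
    Complex.exp (-(2 * s) * Real.log x) = ((x ^ 2 : ℝ) : ℂ) ^ (-s) := by
  rw [Complex.cpow_def_of_ne_zero (by exact_mod_cast (pow_pos hx 2).ne'),
    ← Complex.ofReal_log (pow_pos hx 2).le, Real.log_pow]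
  push_cast
  ring_nf

/-- Mellin transform identity for the zeta function: for a sequence `(λ_n)_{n≥1}`
(here `lam n = λ_{n+1}`) of positive reals with `λ_n ≥ C·n^α`, `C > 0`, `α > 0`,
and `Re s > 1/(2α)`,
`(1/Γ(s)) ∫₀^∞ t^{s−1} (Σ e^{−tλ_n²}) dt = Σ λ_n^{−2s}`,
where the integral and the series converge absolutely
(`λ^{−2s} := exp(−2s·log λ)`). -/
theorem stmt14 (lam : ℕ → ℝ) (C α : ℝ) (hC : 0 < C) (hα : 0 < α)
    (hpos : ∀ n, 0 < lam n)
    (hgrowth : ∀ n : ℕ, C * ((n : ℝ) + 1) ^ α ≤ lam n)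
    (s : ℂ) (hs : 1 / (2 * α) < s.re) :
    IntegrableOn
      (fun t : ℝ => (t : ℂ) ^ (s - 1)
        * ∑' n, (Real.exp (-t * (lam n) ^ 2) : ℂ))
      (Set.Ioi (0 : ℝ)) ∧
    Summable (fun n => ‖Complex.exp (-(2 * s) * Real.log (lam n))‖) ∧
    (1 / Complex.Gamma s)
        * ∫ t in Set.Ioi (0 : ℝ), (t : ℂ) ^ (s - 1)
            * ∑' n, (Real.exp (-t * (lam n) ^ 2) : ℂ)
      = ∑' n, Complex.exp (-(2 * s) * Real.log (lam n)) := by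
  have hσ : 0 < s.re := (by positivity : 0 < 1 / (2 * α)).trans hs
  have hsq : ∀ n, 0 < lam n ^ 2 := fun n ↦ pow_pos (hpos n) 2
  have h_sum : Summable fun n ↦ (lam n ^ 2) ^ (-s.re) := by
    refine (summable_rpow_neg_of_mul_rpow_le hC (by positivity) hgrowth (q := 2 * s.re) ?_).congr
      fun n ↦ ?_
    · rw [div_lt_iff₀ (by positivity)] at hs
      linarith
    · rw [← Real.rpow_natCast_mul (hpos n).le]
      push_cast
      ring_nf
  simp_rw [cexp_neg_two_mul_log_eq_cpow (hpos _), Complex.norm_cpow_eq_rpow_re_of_pos (hsq _),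
    Complex.neg_re]
  exact ⟨integrableOn_cpow_mul_tsum_exp hsq hσ h_sum, h_sum,
    (hasSum_cpow_neg_mellin_tsum_exp hsq hσ h_sum).tsum_eq.symm⟩
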